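/- Suppose for each i the family f ↦ p(U_i | D_i, f; θ) satisfies KL(p(U_i|D_i,f_0;θ) || p(U_i|D_i,f;θ)) ≤ L T ||f_0 − f||², and tr(Var_{q_i}(f_i)) ≤ L' T^{−r}. If the anchor is the mean anchor f_{0i} = E_{q_i}[f_i], then the normalized ELBO gap satisfies 0 ≤ (1/(nT))(L_S(q,θ) − L_A(f_0,q,θ)) ≤ L L' T^{−r}. -/
import Mathlib


open MeasureTheory

section
variable {𝒰 : Type*} [MeasurableSpace 𝒰] {d : ℕ}

/-- Kullback–Leibler divergence between two densities w.r.t. `μ`. -/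
noncomputable def KLdiv (μ : Measure 𝒰) (q p : 𝒰 → ℝ) : ℝ :=
  ∫ u, q u * Real.log (q u / p u) ∂μ

/-- The anchored ELBO
`L_A = Σ_i E_{q_i(f) p(U|D_i,f₀ᵢ)}[log p(D_i,U,f) − log p(U|D_i,f₀ᵢ) − log q_i(f)]`. -/
noncomputable def ELBO_A (μ : Measure 𝒰) (ν : Measure (EuclideanSpace ℝ (Fin d)))
    {n : ℕ} (pJoint : Fin n → 𝒰 → EuclideanSpace ℝ (Fin d) → ℝ)
    (pU : Fin n → EuclideanSpace ℝ (Fin d) → 𝒰 → ℝ)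
    (q : Fin n → EuclideanSpace ℝ (Fin d) → ℝ)
    (f0 : Fin n → EuclideanSpace ℝ (Fin d)) : ℝ :=
  ∑ i, ∫ f, q i f * ∫ u, pU i (f0 i) u *
      (Real.log (pJoint i u f) - Real.log (pU i (f0 i) u) - Real.log (q i f))
      ∂μ ∂ν

/-- The structured ELBO `L_S = Σ_i E_{q_i(f)}[log p(D_i,f;θ) − log q_i(f)]`. -/
noncomputable def ELBO_S (ν : Measure (EuclideanSpace ℝ (Fin d))) {n : ℕ}
    (pDf : Fin n → EuclideanSpace ℝ (Fin d) → ℝ)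
    (q : Fin n → EuclideanSpace ℝ (Fin d) → ℝ) : ℝ :=
  ∑ i, ∫ f, q i f * (Real.log (pDf i f) - Real.log (q i f)) ∂ν


lemma KLdiv_nonneg' {𝒰 : Type*} [MeasurableSpace 𝒰] (μ : Measure 𝒰)
    (p q : 𝒰 → ℝ) (hp : ∀ u, 0 < p u) (hq : ∀ u, 0 < q u)
    (hip : ∫ u, p u ∂μ = 1) (hiq : ∫ u, q u ∂μ = 1)
    (hint : Integrable (fun u => p u * Real.log (p u / q u)) μ) :
    0 ≤ KLdiv μ p q := by
  have hpi : Integrable p μ := integrable_of_integral_eq_one hip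
  have hqi : Integrable q μ := integrable_of_integral_eq_one hiq
  have key : ∀ u, -(p u * Real.log (p u / q u)) ≤ q u - p u := by
    intro u
    have h1 : Real.log (q u / p u) ≤ q u / p u - 1 :=
      Real.log_le_sub_one_of_pos (div_pos (hq u) (hp u))
    have h2 : p u * Real.log (q u / p u) ≤ p u * (q u / p u - 1) :=
      mul_le_mul_of_nonneg_left h1 (hp u).le
    have h3 : p u * (q u / p u - 1) = q u - p u := by
      rw [mul_sub, mul_one, mul_div_cancel₀ _ (hp u).ne']
    have h4 : Real.log (q u / p u) = -Real.log (p u / q u) := by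
      rw [Real.log_div (hq u).ne' (hp u).ne', Real.log_div (hp u).ne' (hq u).ne']
      ring
    rw [h4, mul_neg] at h2
    linarith
  have hmono : ∫ u, -(p u * Real.log (p u / q u)) ∂μ ≤ ∫ u, (q u - p u) ∂μ :=
    integral_mono hint.neg (hqi.sub hpi) key
  rw [integral_neg, integral_sub hqi hpi, hip, hiq] at hmono
  simp only [sub_self] at hmono
  unfold KLdiv
  linarith

/-- **Normalized ELBO gap under the mean anchor.**
Under KL-smoothness of `f ↦ p(U|D_i,f;θ)` and variance concentration
`tr(Var_{q_i}(f)) ≤ L' T^{−r}`, with the mean anchor `f₀ᵢ = E_{q_i}[f]`,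
the normalized ELBO gap satisfies
`0 ≤ (1/(nT))(L_S − L_A) ≤ L L' T^{−r}`. -/
theorem normalized_elbo_gap_mean_anchor
    (μ : Measure 𝒰) (ν : Measure (EuclideanSpace ℝ (Fin d)))
    [SigmaFinite μ] [SigmaFinite ν] {n : ℕ} (hn : 0 < n)
    (pJoint : Fin n → 𝒰 → EuclideanSpace ℝ (Fin d) → ℝ)
    (pU : Fin n → EuclideanSpace ℝ (Fin d) → 𝒰 → ℝ)
    (pDf : Fin n → EuclideanSpace ℝ (Fin d) → ℝ)
    (q : Fin n → EuclideanSpace ℝ (Fin d) → ℝ)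
    (f0 : Fin n → EuclideanSpace ℝ (Fin d))
    (L L' T r : ℝ) (hL : 0 < L) (hL' : 0 < L') (hT : 0 < T)
    (hr0 : 0 < r) (hr1 : r ≤ 1)
    -- the joint density factors as `p(D_i,U,f) = p(D_i,f) p(U|D_i,f)`
    (hfact : ∀ i u f, pJoint i u f = pDf i f * pU i f u)
    -- positivity of the densities
    (hpU_pos : ∀ i f u, 0 < pU i f u) (hpDf_pos : ∀ i f, 0 < pDf i f)
    (hq_pos : ∀ i f, 0 < q i f)
    -- `p(U|D_i,f)` and `q_i` are probability densities
    (hpU_prob : ∀ i f, ∫ u, pU i f u ∂μ = 1)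
    (hq_prob : ∀ i, ∫ f, q i f ∂ν = 1)
    -- finite expectations
    (hint_A : ∀ i, Integrable (fun x : 𝒰 × EuclideanSpace ℝ (Fin d) =>
      q i x.2 * pU i (f0 i) x.1 *
      (Real.log (pJoint i x.1 x.2) - Real.log (pU i (f0 i) x.1)
        - Real.log (q i x.2))) (μ.prod ν))
    (hint_KL : ∀ i (f₀ f : EuclideanSpace ℝ (Fin d)), Integrable
      (fun u => pU i f₀ u * Real.log (pU i f₀ u / pU i f u)) μ)
    (hint_KLmix : ∀ i, Integrable
      (fun f => q i f * KLdiv μ (pU i (f0 i)) (pU i f)) ν)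
    (hint_C : ∀ i, Integrable
      (fun f => q i f * (Real.log (pDf i f) - Real.log (q i f))) ν)
    (hmom1 : ∀ i, Integrable (fun f => q i f • f) ν)
    (hmom2 : ∀ i, Integrable (fun f => q i f * ‖f - f0 i‖ ^ 2) ν)
    -- KL-smoothness of the conditional posterior family
    (hsmooth : ∀ i (f₀ f : EuclideanSpace ℝ (Fin d)),
      KLdiv μ (pU i f₀) (pU i f) ≤ L * T * ‖f₀ - f‖ ^ 2)
    -- the anchor is the mean anchor `f₀ᵢ = E_{q_i}[f]`
    (hanchor : ∀ i, f0 i = ∫ f, q i f • f ∂ν)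
    -- variance concentration: `tr(Var_{q_i}(f)) ≤ L' T^{−r}`
    (hvar : ∀ i, (∫ f, q i f * ‖f - f0 i‖ ^ 2 ∂ν) ≤ L' * T ^ (-r)) :
    0 ≤ (1 / (n * T)) * (ELBO_S ν pDf q - ELBO_A μ ν pJoint pU q f0)
    ∧ (1 / (n * T)) * (ELBO_S ν pDf q - ELBO_A μ ν pJoint pU q f0)
        ≤ L * L' * T ^ (-r) := by
  -- `pU i f` is integrable
  have hpUint : ∀ i f, Integrable (fun u => pU i f u) μ :=
    fun i f => integrable_of_integral_eq_one (hpU_prob i f)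
  -- KL is nonnegative
  have hKL0 : ∀ i f, 0 ≤ KLdiv μ (pU i (f0 i)) (pU i f) := fun i f =>
    KLdiv_nonneg' μ (pU i (f0 i)) (pU i f) (hpU_pos i (f0 i)) (hpU_pos i f)
      (hpU_prob i (f0 i)) (hpU_prob i f) (hint_KL i (f0 i) f)
  -- compute the inner `u`-integral in `ELBO_A`
  have hinner : ∀ i f, (∫ u, pU i (f0 i) u *
      (Real.log (pJoint i u f) - Real.log (pU i (f0 i) u) - Real.log (q i f)) ∂μ)
      = (Real.log (pDf i f) - Real.log (q i f)) - KLdiv μ (pU i (f0 i)) (pU i f) := by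
    intro i f
    have heq : ∀ u, pU i (f0 i) u *
        (Real.log (pJoint i u f) - Real.log (pU i (f0 i) u) - Real.log (q i f))
        = pU i (f0 i) u * (Real.log (pDf i f) - Real.log (q i f))
          - pU i (f0 i) u * Real.log (pU i (f0 i) u / pU i f u) := by
      intro u
      rw [hfact i u f, Real.log_mul (hpDf_pos i f).ne' (hpU_pos i f u).ne',
        Real.log_div (hpU_pos i (f0 i) u).ne' (hpU_pos i f u).ne']
      ring
    rw [integral_congr_ae (Filter.Eventually.of_forall heq),
      integral_sub ((hpUint i (f0 i)).mul_const _) (hint_KL i (f0 i) f),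
      integral_mul_const, hpU_prob i (f0 i), one_mul]
    rfl
  -- the ELBO gap equals a sum of mixed KL integrals
  have hgap : ELBO_S ν pDf q - ELBO_A μ ν pJoint pU q f0
      = ∑ i, ∫ f, q i f * KLdiv μ (pU i (f0 i)) (pU i f) ∂ν := by
    unfold ELBO_S ELBO_A
    rw [← Finset.sum_sub_distrib]
    refine Finset.sum_congr rfl fun i _ => ?_
    have heq : ∀ f, q i f * ∫ u, pU i (f0 i) u *
        (Real.log (pJoint i u f) - Real.log (pU i (f0 i) u) - Real.log (q i f)) ∂μ
        = q i f * (Real.log (pDf i f) - Real.log (q i f))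
          - q i f * KLdiv μ (pU i (f0 i)) (pU i f) := by
      intro f; rw [hinner i f]; ring
    rw [integral_congr_ae (Filter.Eventually.of_forall heq),
      integral_sub (hint_C i) (hint_KLmix i)]
    ring
  set G := ELBO_S ν pDf q - ELBO_A μ ν pJoint pU q f0 with hG
  have hGnn : 0 ≤ G := by
    rw [hgap]
    refine Finset.sum_nonneg fun i _ => integral_nonneg fun f => ?_
    exact mul_nonneg (hq_pos i f).le (hKL0 i f)
  have hGub : G ≤ n * (L * T * (L' * T ^ (-r))) := by
    rw [hgap]
    have hterm : ∀ i : Fin n, (∫ f, q i f * KLdiv μ (pU i (f0 i)) (pU i f) ∂ν)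
        ≤ L * T * (L' * T ^ (-r)) := by
      intro i
      have h1 : (∫ f, q i f * KLdiv μ (pU i (f0 i)) (pU i f) ∂ν)
          ≤ ∫ f, L * T * (q i f * ‖f - f0 i‖ ^ 2) ∂ν := by
        refine integral_mono (hint_KLmix i) ((hmom2 i).const_mul _) fun f => ?_
        have := hsmooth i (f0 i) f
        rw [norm_sub_rev] at this
        calc q i f * KLdiv μ (pU i (f0 i)) (pU i f)
            ≤ q i f * (L * T * ‖f - f0 i‖ ^ 2) :=
              mul_le_mul_of_nonneg_left this (hq_pos i f).le
          _ = L * T * (q i f * ‖f - f0 i‖ ^ 2) := by ring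
      rw [integral_const_mul] at h1
      calc (∫ f, q i f * KLdiv μ (pU i (f0 i)) (pU i f) ∂ν)
          ≤ L * T * ∫ f, q i f * ‖f - f0 i‖ ^ 2 ∂ν := h1
        _ ≤ L * T * (L' * T ^ (-r)) :=
            mul_le_mul_of_nonneg_left (hvar i) (by positivity)
    calc (∑ i, ∫ f, q i f * KLdiv μ (pU i (f0 i)) (pU i f) ∂ν)
        ≤ ∑ _i : Fin n, L * T * (L' * T ^ (-r)) :=
          Finset.sum_le_sum fun i _ => hterm i
      _ = n * (L * T * (L' * T ^ (-r))) := by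
          rw [Finset.sum_const, Finset.card_univ, Fintype.card_fin, nsmul_eq_mul]
  have hnT : (0:ℝ) < (n : ℝ) * T := by positivity
  constructor
  · exact mul_nonneg (by positivity) hGnn
  · have h := mul_le_mul_of_nonneg_left hGub (le_of_lt (by positivity :
      (0:ℝ) < 1 / ((n:ℝ) * T)))
    calc 1 / ((n:ℝ) * T) * G ≤ 1 / ((n:ℝ) * T) * (n * (L * T * (L' * T ^ (-r)))) := h
      _ = L * L' * T ^ (-r) := by
          field_simp


end
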